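/- arXiv:2506.15427 — 7 statements merged into one kernel-verified Lean document; each statement's English description precedes it below -/
import Mathlib

section
/- Every Markov triple, i.e., every triple (a,b,c) of positive integers with a² + b² + c² = 3abc, can be obtained from the triple (1,1,1) by a finite sequence of mutations (a,b,c) ↦ (a,b,3ab−c) and permutations of the entries. -/
/-- An elementary move on triples of integers: either a mutation of the third entry,
or a transposition of entries (transpositions generate all permutations). -/
inductive MarkovMove : (ℤ × ℤ × ℤ) → (ℤ × ℤ × ℤ) → Prop
  | mutate (a b c : ℤ) : MarkovMove (a, b, c) (a, b, 3 * a * b - c)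
  | swap₁₂ (a b c : ℤ) : MarkovMove (a, b, c) (b, a, c)
  | swap₂₃ (a b c : ℤ) : MarkovMove (a, b, c) (a, c, b)

/-!
Vieta descent. Fixing `a, b`, the Markov equation is a quadratic in `c` whose other root is
`c' = 3ab - c`; since `c c' = a² + b² > 0`, the mutated triple is again a Markov triple. If `c` is
the largest entry and `(a, b) ≠ (1, 1)`, then `2(a² + b²) < 3abc` forces `c' < c`, so mutating
the largest entry strictly decreases `a + b + c` until one reaches `(1, 1, 1)` or `(1, 1, 2)`.
-/

def IsMarkovTriple (a b c : ℤ) : Prop :=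
  0 < a ∧ 0 < b ∧ 0 < c ∧ a ^ 2 + b ^ 2 + c ^ 2 = 3 * a * b * c

namespace IsMarkovTriple

variable {a b c : ℤ}

theorem swap₁₂ (h : IsMarkovTriple a b c) : IsMarkovTriple b a c := by
  obtain ⟨ha, hb, hc, h⟩ := h
  exact ⟨hb, ha, hc, by linear_combination h⟩

theorem swap₂₃ (h : IsMarkovTriple a b c) : IsMarkovTriple a c b := by
  obtain ⟨ha, hb, hc, h⟩ := h
  exact ⟨ha, hc, hb, by linear_combination h⟩

theorem mutate (h : IsMarkovTriple a b c) : IsMarkovTriple a b (3 * a * b - c) := by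
  obtain ⟨ha, hb, hc, h⟩ := h
  have hvieta : c * (3 * a * b - c) = a ^ 2 + b ^ 2 := by linear_combination -h
  have hpos : 0 < c * (3 * a * b - c) := by rw [hvieta]; positivity
  exact ⟨ha, hb, pos_of_mul_pos_right hpos hc.le, by linear_combination h⟩

theorem mutate_lt (h : IsMarkovTriple a b c) (hac : a ≤ c) (hbc : b ≤ c) (hab : 2 < a + b) :
    3 * a * b - c < c := by
  obtain ⟨ha, hb, hc, h⟩ := h
  nlinarith [mul_le_mul_of_nonneg_left hac hb.le, mul_le_mul_of_nonneg_left hbc ha.le]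

theorem eq_one_or_eq_two (h : IsMarkovTriple 1 1 c) : c = 1 ∨ c = 2 := by
  have hfactor : (c - 1) * (c - 2) = 0 := by linear_combination h.2.2.2
  rcases mul_eq_zero.mp hfactor with h1 | h2
  · exact Or.inl (sub_eq_zero.mp h1)
  · exact Or.inr (sub_eq_zero.mp h2)

theorem reflTransGen_one (h : IsMarkovTriple a b c) :
    Relation.ReflTransGen MarkovMove (1, 1, 1) (a, b, c) := by
  induction hn : (a + b + c).toNat using Nat.strong_induction_on generalizing a b c with
  | _ n ih =>
  wlog hmax : a ≤ c ∧ b ≤ c generalizing a b c with H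
  · rcases le_total a b with hab | hba
    · exact (H h.swap₂₃ (by omega) (by omega)).tail (.swap₂₃ _ _ _)
    · have hcba := H h.swap₁₂.swap₂₃.swap₁₂ (by omega) (by omega)
      exact ((hcba.tail (.swap₁₂ _ _ _)).tail (.swap₂₃ _ _ _)).tail (.swap₁₂ _ _ _)
  by_cases h11 : a = 1 ∧ b = 1
  · obtain ⟨rfl, rfl⟩ := h11
    rcases h.eq_one_or_eq_two with rfl | rfl
    · exact .refl
    · exact .single (.mutate 1 1 1)
  · have ⟨ha, hb, _, _⟩ := h
    have hlt := h.mutate_lt hmax.1 hmax.2 (by omega)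
    have hc' := h.mutate.2.2.1
    have hmutated := ih _ (by omega) h.mutate rfl
    simpa only [sub_sub_cancel] using hmutated.tail (.mutate a b (3 * a * b - c))

end IsMarkovTriple

/-- Every Markov triple is obtained from `(1,1,1)` by a finite sequence of mutations
and permutations of the entries. -/
theorem markov_reachable_from_one (a b c : ℤ) (ha : 0 < a) (hb : 0 < b) (hc : 0 < c)
    (h : a ^ 2 + b ^ 2 + c ^ 2 = 3 * a * b * c) :
    Relation.ReflTransGen MarkovMove (1, 1, 1) (a, b, c) :=
  IsMarkovTriple.reflTransGen_one ⟨ha, hb, hc, h⟩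
end

section
/- Let f = x + y + 1/(xy) be a Laurent polynomial in two variables over ℂ. Then for every natural number d, the constant term of f^d equals d!/(k!)³ if d = 3k for some natural number k, and equals 0 if d is not divisible by 3. -/
/-- Laurent polynomials in `n` variables over `ℂ`. -/
abbrev LaurentPoly (n : ℕ) : Type := AddMonoidAlgebra ℂ (Fin n → ℤ)

/-- The constant term of a Laurent polynomial: the coefficient of the monomial `x^0`. -/
noncomputable def constTerm {n : ℕ} (f : LaurentPoly n) : ℂ := f.coeff 0

/-- The standard toric Landau–Ginzburg model of `ℙ²`. -/
noncomputable def lgP2 : LaurentPoly 2 :=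
  AddMonoidAlgebra.single ![1, 0] 1 + AddMonoidAlgebra.single ![0, 1] 1 +
    AddMonoidAlgebra.single ![-1, -1] 1

/-!
Write `lgP2 = x^{e₀} + x^{e₁} + x^{e₂}` with `e₀ = (1,0)`, `e₁ = (0,1)`, `e₂ = (-1,-1)`. By the
multinomial theorem, the coefficient of `x^0` in `lgP2 ^ d` is the sum of the multinomial
coefficients `d! / (a! b! c!)` over `a + b + c = d` with `a e₀ + b e₁ + c e₂ = 0`, i.e. `a = b = c`.
So only `a = b = c = d / 3` contributes, and only when `3 ∣ d`.
-/

open Finset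

namespace AddMonoidAlgebra

variable {R M ι : Type*} [CommSemiring R] [AddCommMonoid M] [DecidableEq ι] [DecidableEq M]

theorem coeff_sum_single_one_pow (s : Finset ι) (v : ι → M) (d : ℕ) (m : M) :
    ((∑ i ∈ s, single (v i) (1 : R)) ^ d).coeff m =
      ∑ k ∈ s.piAntidiag d with ∑ i ∈ s, k i • v i = m, (Nat.multinomial s k : R) := by
  simp only [sum_pow_eq_sum_piAntidiag, single_pow, one_pow, prod_single, prod_const_one,
    natCast_def, single_mul_single, zero_add, mul_one, coeff_sum, Finsupp.finsetSum_apply,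
    coeff_single, Finsupp.single_apply, sum_filter]

end AddMonoidAlgebra

theorem Nat.cast_multinomial_const {K α : Type*} [Field K] [CharZero K] (s : Finset α) (a : ℕ) :
    (Nat.multinomial s (fun _ ↦ a) : K) = ((#s * a).factorial : K) / (a.factorial : K) ^ #s := by
  have h := Nat.multinomial_spec s (fun _ ↦ a)
  simp only [prod_const, sum_const, smul_eq_mul] at h
  rw [eq_div_iff (pow_ne_zero _ (Nat.cast_ne_zero.2 a.factorial_ne_zero)), mul_comm]
  exact_mod_cast h

theorem Finset.filter_piAntidiag_univ_const {ι : Type*} [Fintype ι] [DecidableEq ι]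
    [DecidablePred fun k : ι → ℕ ↦ ∀ i j, k i = k j] (d : ℕ) :
    {k ∈ (univ : Finset ι).piAntidiag d | ∀ i j, k i = k j} =
      if Fintype.card ι ∣ d then {fun _ ↦ d / Fintype.card ι} else ∅ := by
  ext k
  simp only [mem_filter, mem_piAntidiag, mem_univ, implies_true, and_true]
  have hsum (hk : ∀ i j, k i = k j) (i : ι) : ∑ j, k j = Fintype.card ι * k i := by
    rw [sum_congr rfl fun j _ ↦ hk j i, sum_const, card_univ, smul_eq_mul]
  split_ifs with hd
  · rw [mem_singleton]
    constructor
    · rintro ⟨rfl, hk⟩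
      funext i
      rw [hsum hk i, Nat.mul_div_cancel_left _ (Fintype.card_pos_iff.2 ⟨i⟩)]
    · rintro rfl
      simp [Nat.mul_div_cancel' hd]
  · simp only [notMem_empty, iff_false, not_and]
    rintro rfl hk
    cases isEmpty_or_nonempty ι with
    | inl => simp at hd
    | inr h => exact hd ⟨_, hsum hk h.some⟩

def lgP2Exponents : Fin 3 → Fin 2 → ℤ := ![![1, 0], ![0, 1], ![-1, -1]]

theorem lgP2_eq_sum_single : lgP2 = ∑ i, AddMonoidAlgebra.single (lgP2Exponents i) 1 := by
  rw [Fin.sum_univ_three]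
  rfl

theorem sum_smul_lgP2Exponents_eq_zero_iff (k : Fin 3 → ℕ) :
    ∑ i, k i • lgP2Exponents i = 0 ↔ ∀ i j, k i = k j := by
  simp [funext_iff, Fin.sum_univ_three, Fin.forall_fin_succ, lgP2Exponents]
  omega

theorem constTerm_lgP2_pow_eq_ite (d : ℕ) :
    constTerm (lgP2 ^ d) =
      if 3 ∣ d then (Nat.multinomial univ fun _ : Fin 3 ↦ d / 3 : ℂ) else 0 := by
  simp_rw [constTerm, lgP2_eq_sum_single, AddMonoidAlgebra.coeff_sum_single_one_pow,
    sum_smul_lgP2Exponents_eq_zero_iff]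
  rw [filter_piAntidiag_univ_const, Fintype.card_fin]
  split_ifs <;> simp only [sum_singleton, sum_empty]

/-- The constant term of `(x + y + 1/(xy))^d` is `d!/(k!)³` when `d = 3k` and `0`
when `3 ∤ d`. -/
theorem constTerm_lgP2_pow (d : ℕ) :
    (∀ k : ℕ, d = 3 * k →
      constTerm (lgP2 ^ d) = (d.factorial : ℂ) / ((k.factorial : ℂ)) ^ 3) ∧
    (¬ (3 ∣ d) → constTerm (lgP2 ^ d) = 0) := by
  refine ⟨?_, fun hd ↦ by rw [constTerm_lgP2_pow_eq_ite, if_neg hd]⟩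
  rintro k rfl
  rw [constTerm_lgP2_pow_eq_ite, if_pos (dvd_mul_right 3 k), Nat.mul_div_cancel_left k three_pos,
    Nat.cast_multinomial_const, card_univ, Fintype.card_fin]
end

section
/- Let f = x + y + 1/x + 1/y be a Laurent polynomial in two variables over ℂ. Then for every natural number k, the constant term of f^{2k} equals binom(2k,k)², and the constant term of f^{2k+1} equals 0. -/
/-- The standard toric Landau–Ginzburg model of `ℙ¹ × ℙ¹`. -/
noncomputable def lgP1P1 : LaurentPoly 2 :=
  AddMonoidAlgebra.single ![1, 0] 1 + AddMonoidAlgebra.single ![0, 1] 1 +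
    AddMonoidAlgebra.single ![-1, 0] 1 + AddMonoidAlgebra.single ![0, -1] 1

open AddMonoidAlgebra Finset

theorem AddMonoidAlgebra.single_one_add_single_one_pow {R G : Type*} [CommSemiring R]
    [AddCommMonoid G] (a b : G) (d : ℕ) :
    (single a 1 + single b 1 : R[G]) ^ d =
      ∑ j ∈ range (d + 1), single (j • a + (d - j) • b) (d.choose j : R) := by
  rw [add_pow]
  refine sum_congr rfl fun j _ => ?_
  rw [single_pow, single_pow, one_pow, one_pow, single_mul_single, one_mul, natCast_def,
    single_mul_single, add_zero, one_mul]

theorem lgP1P1_eq_mul :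
    lgP1P1 = (single ![1, 0] 1 + single ![0, 1] 1) * (single 0 1 + single ![-1, -1] 1) := by
  have hx : (![1, 0] : Fin 2 → ℤ) + ![-1, -1] = ![0, -1] := by ext i; fin_cases i <;> rfl
  have hy : (![0, 1] : Fin 2 → ℤ) + ![-1, -1] = ![-1, 0] := by ext i; fin_cases i <;> rfl
  rw [lgP1P1, mul_add, add_mul, add_mul]
  simp only [single_mul_single, one_mul, add_zero, hx, hy]
  abel

theorem monomial_exponent_eq_zero_iff {d j l : ℕ} (hj : j ≤ d) (hl : l ≤ d) :
    j • (![1, 0] : Fin 2 → ℤ) + (d - j) • ![0, 1] + (l • 0 + (d - l) • ![-1, -1]) = 0 ↔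
      l = j ∧ 2 * j = d := by
  rw [funext_iff, Fin.forall_fin_two]
  simp only [Pi.add_apply, Pi.smul_apply, Matrix.cons_val_zero, Matrix.cons_val_one,
    Pi.zero_apply, smul_zero]
  simp only [nsmul_eq_mul, mul_one, mul_neg_one]
  omega

theorem constTerm_lgP1P1_pow_eq_sum (d : ℕ) :
    constTerm (lgP1P1 ^ d) =
      ∑ j ∈ range (d + 1), if 2 * j = d then (d.choose j : ℂ) ^ 2 else 0 := by
  rw [constTerm, lgP1P1_eq_mul, mul_pow, single_one_add_single_one_pow,
    single_one_add_single_one_pow, sum_mul_sum, coeff_sum, Finsupp.finsetSum_apply]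
  refine sum_congr rfl fun j hj_mem => ?_
  rw [coeff_sum, Finsupp.finsetSum_apply]
  have hj : j ≤ d := Nat.lt_succ_iff.mp (mem_range.mp hj_mem)
  calc ∑ l ∈ range (d + 1), (single _ _ * single _ _ : LaurentPoly 2).coeff 0
      = ∑ l ∈ range (d + 1), if l = j then
          (if 2 * j = d then (d.choose j : ℂ) * d.choose l else 0) else 0 := by
        refine sum_congr rfl fun l hl => ?_
        rw [single_mul_single, coeff_single, Finsupp.single_apply,
          if_congr (monomial_exponent_eq_zero_iff hj (Nat.lt_succ_iff.mp (mem_range.mp hl))) rfl rfl,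
          ite_and]
    _ = if 2 * j = d then (d.choose j : ℂ) ^ 2 else 0 := by
        rw [sum_ite_eq', if_pos hj_mem, sq]

/-- The constant term of `(x + y + 1/x + 1/y)^(2k)` is `(C(2k,k))²`, and the constant
term of the odd powers vanishes. -/
theorem constTerm_lgP1P1_pow (k : ℕ) :
    constTerm (lgP1P1 ^ (2 * k)) = (((2 * k).choose k : ℕ) : ℂ) ^ 2 ∧
      constTerm (lgP1P1 ^ (2 * k + 1)) = 0 := by
  refine ⟨?_, ?_⟩
  · simp_rw [constTerm_lgP1P1_pow_eq_sum, mul_right_inj' two_ne_zero]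
    rw [sum_ite_eq', if_pos (mem_range.mpr (by omega))]
  · rw [constTerm_lgP1P1_pow_eq_sum]
    exact sum_eq_zero fun j _ => if_neg (by omega)
end

section
/- Let f = x + y + z + 1/(xyz) be a Laurent polynomial in three variables over ℂ. Then for every natural number d, the constant term of f^d equals d!/(k!)⁴ if d = 4k, and 0 otherwise. -/
/-- The toric Landau–Ginzburg model of `ℙ³`. -/
noncomputable def lgP3 : LaurentPoly 3 :=
  AddMonoidAlgebra.single ![1, 0, 0] 1 + AddMonoidAlgebra.single ![0, 1, 0] 1 +
    AddMonoidAlgebra.single ![0, 0, 1] 1 + AddMonoidAlgebra.single ![-1, -1, -1] 1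

/-!
By the multinomial theorem, `(x + y + z + (xyz)⁻¹)^d` is the sum over `a + b + c + e = d` of
`d!/(a! b! c! e!) · x^(a-e) y^(b-e) z^(c-e)`. The monomial is constant exactly when
`a = b = c = e`, which forces `d = 4k` and leaves the single term `d!/(k!)⁴`.
-/

open Finset AddMonoidAlgebra Nat

theorem AddMonoidAlgebra.coeff_sum_single_one_pow_s7 {ι R M : Type*} [DecidableEq ι]
    [CommSemiring R] [AddCommMonoid M] [DecidableEq M] (s : Finset ι) (v : ι → M) (d : ℕ)
    (m : M) :
    ((∑ i ∈ s, single (v i) (1 : R)) ^ d).coeff m =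
      ∑ k ∈ s.piAntidiag d with ∑ i ∈ s, k i • v i = m, (multinomial s k : R) := by
  rw [sum_pow_eq_sum_piAntidiag, Finset.sum_filter, AddMonoidAlgebra.coeff_sum,
    Finsupp.finsetSum_apply]
  refine Finset.sum_congr rfl fun k _ => ?_
  simp [single_pow, prod_single, natCast_def, single_mul_single, Finsupp.single_apply]

theorem Nat.multinomial_const_mul_factorial_pow {α : Type*} (s : Finset α) (c : ℕ) :
    multinomial s (fun _ => c) * c ! ^ #s = (#s * c)! := by
  simpa [mul_comm] using multinomial_spec s fun _ => c

theorem Finset.filter_piAntidiag_univ_eq_const {ι : Type*} [Fintype ι] [DecidableEq ι]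
    (i₀ : ι) (d : ℕ) :
    {k ∈ (univ : Finset ι).piAntidiag d | k = fun _ => k i₀} =
      if Fintype.card ι ∣ d then {fun _ => d / Fintype.card ι} else ∅ := by
  have hcard : 0 < Fintype.card ι := Fintype.card_pos_iff.mpr ⟨i₀⟩
  ext k
  simp only [mem_filter, mem_piAntidiag, mem_univ, implies_true, and_true]
  constructor
  · rintro ⟨hsum, hk⟩
    rw [hk, sum_const, card_univ, smul_eq_mul] at hsum
    rw [if_pos ⟨_, hsum.symm⟩, mem_singleton, hk, ← hsum, Nat.mul_div_cancel_left _ hcard]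
  · intro hk
    split_ifs at hk with h
    · rw [mem_singleton] at hk
      subst hk
      simp [Nat.mul_div_cancel' h]
    · exact absurd hk (notMem_empty k)

def lgP3Exponent : Fin 4 → Fin 3 → ℤ := ![![1, 0, 0], ![0, 1, 0], ![0, 0, 1], ![-1, -1, -1]]

theorem lgP3_eq_sum_single : lgP3 = ∑ i, single (lgP3Exponent i) 1 := by
  simp [lgP3, lgP3Exponent, Fin.sum_univ_four]

theorem sum_smul_lgP3Exponent_eq_zero_iff (k : Fin 4 → ℕ) :
    ∑ i, k i • lgP3Exponent i = 0 ↔ k = fun _ => k 3 := by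
  simp only [funext_iff, Fin.forall_fin_succ, IsEmpty.forall_iff, Fin.sum_univ_four,
    lgP3Exponent, nsmul_eq_mul, Pi.add_apply, Pi.mul_apply, Pi.natCast_apply, Pi.zero_apply,
    Matrix.cons_val_zero, Matrix.cons_val_one, Matrix.cons_val, Matrix.cons_val_succ,
    Matrix.cons_val_fin_one, Fin.succ_zero_eq_one, Fin.succ_one_eq_two, Fin.reduceSucc, and_true]
  omega

theorem constTerm_lgP3_pow_eq_sum (d : ℕ) :
    constTerm (lgP3 ^ d) =
      ∑ k ∈ (univ : Finset (Fin 4)).piAntidiag d with k = fun _ => k 3,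
        (multinomial univ k : ℂ) := by
  simp only [constTerm, lgP3_eq_sum_single, coeff_sum_single_one_pow_s7,
    sum_smul_lgP3Exponent_eq_zero_iff]

/-- The constant term of `(x + y + z + 1/(xyz))^d` is `d!/(k!)⁴` when `d = 4k` and `0`
otherwise. -/
theorem constTerm_lgP3_pow (d : ℕ) :
    (∀ k : ℕ, d = 4 * k →
      constTerm (lgP3 ^ d) = (d.factorial : ℂ) / ((k.factorial : ℂ)) ^ 4) ∧
    (¬ (4 ∣ d) → constTerm (lgP3 ^ d) = 0) := by
  rw [constTerm_lgP3_pow_eq_sum, filter_piAntidiag_univ_eq_const, Fintype.card_fin]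
  refine ⟨fun c hc => ?_, fun h => by simp [h]⟩
  subst hc
  have hmult := multinomial_const_mul_factorial_pow (univ : Finset (Fin 4)) c
  rw [if_pos (dvd_mul_right 4 c), sum_singleton, Nat.mul_div_cancel_left c four_pos,
    eq_div_iff (pow_ne_zero _ (mod_cast factorial_ne_zero c))]
  exact_mod_cast hmult
end

section
/- Let w : ℤⁿ → ℤ be a ℤ-linear functional and a a nonzero Laurent polynomial supported on ker(w). Let f be a Laurent polynomial such that g := μ_{w,a}(f) is again a Laurent polynomial, where μ_{w,a}(x^v) = x^v a^{w(v)}. Then for every natural number d, the constant term of g^d equals the constant term of f^d; hence mutations preserve the period of a Laurent polynomial. -/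
/-- The embedding of Laurent polynomials into their field of fractions. -/
noncomputable def emb (n : ℕ) : LaurentPoly n →+* FractionRing (LaurentPoly n) :=
  algebraMap (LaurentPoly n) (FractionRing (LaurentPoly n))

/-! Split `f` into its `w`-homogeneous components `f = ∑ fᵢ`. The mutation multiplies `fᵢ` by
`aⁱ`, so for `N` large the identity `g aᴺ = ∑ fᵢ a^(i + N)` holds among Laurent polynomials.
As `a` has `w`-degree `0`, taking degree-zero components gives `g₀ aᴺ = f₀ aᴺ`, hence `g₀ = f₀`;
and the constant term only sees the degree-zero component. Apply this to `fᵈ` and `gᵈ`. -/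

open AddMonoidAlgebra DirectSum

namespace AddMonoidAlgebra

variable {R M ι : Type*} [CommSemiring R]

theorem coeff_eq_zero_of_mem_gradeBy {w : M → ι} {i : ι} {x : R[M]} (hx : x ∈ gradeBy R w i)
    {m : M} (hm : w m ≠ i) : x.coeff m = 0 :=
  Finsupp.notMem_support_iff.mp fun h => hm (hx m h)

variable [AddMonoid M]

theorem coeff_decompose_gradeBy_of_eq [AddMonoid ι] [DecidableEq ι] (w : M →+ ι) (p : R[M])
    {m : M} {i : ι} (hm : w m = i) : (decompose (gradeBy R w) p i : R[M]).coeff m = p.coeff m := by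
  classical
  subst hm
  conv_rhs => rw [← sum_support_decompose (gradeBy R w) p]
  simp only [coeff_sum, Finsupp.coe_finsetSum, Finset.sum_apply]
  rw [Finset.sum_eq_single (w m) (fun i _ hi => ?_) fun hm => ?_]
  · exact coeff_eq_zero_of_mem_gradeBy (decompose (gradeBy R w) p i).2 (Ne.symm hi)
  · simp [DFinsupp.notMem_support_iff.mp hm]

section Mutation

variable {K : Type*} [DivisionRing K] (e τ : R[M] →+* K) (a : R[M]) (w : M →+ ℤ)
  (hτ : ∀ v c, τ (single v c) = e (single v c) * e a ^ w v)
include hτ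

theorem map_eq_mul_zpow_of_mem_gradeBy {i : ℤ} {x : R[M]} (hx : x ∈ gradeBy R w i) :
    τ x = e x * e a ^ i := by
  conv_lhs => rw [← sum_coeff_single x]
  conv_rhs => rw [← sum_coeff_single x]
  rw [map_finsuppSum, map_finsuppSum, Finsupp.sum_mul]
  exact Finsupp.sum_congr fun v hv => by rw [hτ, hx v hv]

theorem decompose_zero_eq_of_map_eq (he : Function.Injective e) (ha : a ∈ gradeBy R w 0)
    (hea : e a ≠ 0) {p q : R[M]} (hpq : τ p = e q) :
    (decompose (gradeBy R w) q 0 : R[M]) = decompose (gradeBy R w) p 0 := by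
  classical
  let S := (decompose (gradeBy R w) p).support
  let pr : ℤ → R[M] := fun i => decompose (gradeBy R w) p i
  obtain ⟨N, hN⟩ : ∃ N : ℕ, ∀ i ∈ S, 0 ≤ i + N :=
    ⟨∑ i ∈ S, i.natAbs, fun i hi => by
      have := Finset.single_le_sum (f := fun i : ℤ => i.natAbs) (by simp) hi
      omega⟩
  have hshift : q * a ^ N = ∑ i ∈ S, pr i * a ^ (i + N).toNat := by
    apply he
    rw [map_mul, map_pow, ← hpq, map_sum, ← sum_support_decompose (gradeBy R w) p, map_sum,
      Finset.sum_mul]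
    refine Finset.sum_congr rfl fun i hi => ?_
    rw [map_eq_mul_zpow_of_mem_gradeBy e τ a w hτ (decompose (gradeBy R w) p i).2, map_mul,
      map_pow, mul_assoc, ← zpow_natCast, ← zpow_natCast, ← zpow_add₀ hea,
      Int.toNat_of_nonneg (hN i hi)]
  have haN (k : ℕ) : a ^ k ∈ gradeBy R w 0 := by
    simpa using SetLike.pow_mem_graded k ha
  have hdeg0 := congrArg (GradedRing.proj (gradeBy R w) 0) hshift
  simp only [map_sum, GradedRing.proj_apply, coe_decompose_mul_of_right_mem_zero _ (haN _)] at hdeg0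
  rw [Finset.sum_eq_single 0
      (fun i _ hi => by rw [decompose_of_mem_ne _ (decompose (gradeBy R w) p i).2 hi, zero_mul])
      (fun h0 => by simp [pr, DFinsupp.notMem_support_iff.mp h0]),
    decompose_of_mem_same _ (decompose (gradeBy R w) p 0).2, zero_add, Int.toNat_natCast] at hdeg0
  apply he
  exact mul_right_cancel₀ (pow_ne_zero N hea)
    (by simpa only [map_mul, map_pow] using congrArg e hdeg0)

end Mutation

end AddMonoidAlgebra

/-- If `g` is a mutation of `f` (i.e. `g` is a Laurent polynomial equal, in the fraction
field, to the image of `f` under the mutation automorphism `x^v ↦ x^v a^{w v}` with factor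
`a` supported on `ker w`), then the constant terms of all powers of `f` and `g` agree;
hence mutations preserve the period. -/
theorem mutation_preserves_period (n : ℕ) (w : (Fin n → ℤ) →+ ℤ)
    (a : LaurentPoly n) (ha : a ≠ 0) (hsa : ∀ v ∈ a.coeff.support, w v = 0)
    (f g : LaurentPoly n)
    (σ : FractionRing (LaurentPoly n) ≃+* FractionRing (LaurentPoly n))
    (hσ : ∀ (v : Fin n → ℤ) (c : ℂ),
      σ (emb n (AddMonoidAlgebra.single v c)) =
        emb n (AddMonoidAlgebra.single v c) * (emb n a) ^ (w v))
    (hg : σ (emb n f) = emb n g) (d : ℕ) :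
    constTerm (g ^ d) = constTerm (f ^ d) := by
  have he : Function.Injective (emb n) := IsFractionRing.injective _ _
  have hdeg0 := decompose_zero_eq_of_map_eq (emb n) ((σ : _ →+* _).comp (emb n)) a w hσ he hsa
    ((map_ne_zero_iff _ he).mpr ha) (p := f ^ d) (q := g ^ d) (by simp [hg])
  have hconst (p : LaurentPoly n) :
      constTerm p = (decompose (gradeBy ℂ w) p 0 : LaurentPoly n).coeff 0 :=
    (coeff_decompose_gradeBy_of_eq w p (map_zero w)).symm
  rw [hconst, hconst, hdeg0]
end

section
/- The Laurent polynomial g = x + y + z + (x+y+1)³/(xyz), obtained from f = x + y + z(x+y+1) + (x+y+1)²/(xyz) by the mutation with weight w = (0,0,−1) and factor a = x + y + 1, is a Laurent polynomial (i.e., the rational function μ_{w,a}(f) has no denominator other than monomials), and for every natural number d ≤ 6 the constant terms of f^d and g^d agree. -/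
namespace MM215

/-- The monomial `x`. -/
noncomputable def X : LaurentPoly 3 := AddMonoidAlgebra.single ![1, 0, 0] 1
/-- The monomial `y`. -/
noncomputable def Y : LaurentPoly 3 := AddMonoidAlgebra.single ![0, 1, 0] 1
/-- The monomial `z`. -/
noncomputable def Z : LaurentPoly 3 := AddMonoidAlgebra.single ![0, 0, 1] 1
/-- The monomial `1/(xyz)`. -/
noncomputable def XYZinv : LaurentPoly 3 := AddMonoidAlgebra.single ![-1, -1, -1] 1

/-- `f = x + y + z(x+y+1) + (x+y+1)²/(xyz)`, a toric LG model of the blow-up of `ℙ³`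
in the intersection of a quadric and a cubic (Mori–Mukai No. 2.15). -/
noncomputable def f : LaurentPoly 3 := X + Y + Z * (X + Y + 1) + XYZinv * (X + Y + 1) ^ 2

/-- `g = x + y + z + (x+y+1)³/(xyz)`. -/
noncomputable def g : LaurentPoly 3 := X + Y + Z + XYZinv * (X + Y + 1) ^ 3

/-- The weight `w(v₁,v₂,v₃) = -v₃`. -/
noncomputable def w : (Fin 3 → ℤ) →+ ℤ := -(Pi.evalAddMonoidHom (fun _ : Fin 3 => ℤ) 2)

/-- The mutation factor `a = x + y + 1`, supported on `ker w`. -/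
noncomputable def a : LaurentPoly 3 := X + Y + 1

end MM215

/-!
The mutation with weight `ω` and factor `a` (supported on `ker ω`) multiplies each monomial
`x^v` by `a^{ω v}`. It is injective on Laurent polynomials because, once `a` is inverted, the
twist by `-ω` undoes it; hence it extends to the fraction field, where the twists by `ω` and `-ω`
are mutually inverse.

For the constant terms, `f = s + u + v` and `g = s + u' + v'` with `s`, `u`, `v`, `u'`, `v'` of
`w`-degrees `0, -1, 1, -1, 1` and `u v = u' v'`. In the multinomial expansion of `f^d` only the
terms `s^m u^i v^i` have `w`-degree `0`, and they coincide with those of `g^d`.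
-/

namespace AddMonoidAlgebra

section Twist

variable {k G S T : Type*} [CommSemiring k] [AddCommGroup G] [CommSemiring S] [CommSemiring T]

/-- The mutation `μ_{ω,a}` is `twist φ ω u` with `φ` the embedding into the fraction field and
`u` the image of `a`. -/
noncomputable def twist (φ : AddMonoidAlgebra k G →+* S) (ω : G →+ ℤ) (u : Sˣ) :
    AddMonoidAlgebra k G →+* S :=
  liftNCRingHom (φ.comp singleZeroRingHom)
    (φ.toMonoidHom.comp (of k G) *
      (Units.coeHom S).comp ((zpowersHom Sˣ u).comp ω.toMultiplicative))
    fun _ _ => Commute.all _ _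

variable (φ : AddMonoidAlgebra k G →+* S) (ω ω' : G →+ ℤ) (u : Sˣ)

theorem twist_single (v : G) (c : k) :
    twist φ ω u (single v c) = φ (single v c) * ↑(u ^ ω v) := by
  change liftNC _ _ (single v c) = _
  rw [liftNC_single]
  change φ (single 0 c) * (φ (single v 1) * ↑(u ^ ω v)) = _
  rw [← mul_assoc, ← map_mul, single_mul_single, zero_add, mul_one]

theorem twist_zero : twist φ 0 u = φ :=
  ringHom_ext (fun _ => by simp [twist_single]) fun _ => by simp [twist_single]

theorem twist_twist : twist (twist φ ω u) ω' u = twist φ (ω + ω') u :=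
  ringHom_ext (fun _ => by simp [twist_single]) fun v => by
    simp only [twist_single, AddMonoidHom.add_apply, zpow_add, Units.val_mul, mul_assoc]

theorem comp_twist (f : S →+* T) :
    f.comp (twist φ ω u) = twist (f.comp φ) ω (Units.map f u) :=
  ringHom_ext (fun _ => by simp [twist_single]) fun _ => by simp [twist_single, ← map_zpow]

theorem comp_twist_eq_of_comp_eq_twist_neg {ψ : S →+* S} (hψ : ψ.comp φ = twist φ (-ω) u)
    (hu : ψ u = u) : ψ.comp (twist φ ω u) = φ := by
  rw [comp_twist, show Units.map ψ u = u from Units.ext hu, hψ, twist_twist, neg_add_cancel,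
    twist_zero]

theorem twist_of_mem_gradeBy {p : AddMonoidAlgebra k G} {n : ℤ} (hp : p ∈ gradeBy k ω n) :
    twist φ ω u p = φ p * ↑(u ^ n) := by
  rw [mem_gradeBy_iff] at hp
  conv_lhs => rw [← sum_coeff_single p]
  conv_rhs => rw [← sum_coeff_single p]
  simp only [Finsupp.sum, map_sum, Finset.sum_mul]
  refine Finset.sum_congr rfl fun v hv => ?_
  rw [twist_single, hp hv]

end Twist

theorem mem_gradeBy_neg {k G : Type*} [CommSemiring k] [AddCommGroup G] {ω : G →+ ℤ}
    {p : AddMonoidAlgebra k G} {n : ℤ} (hp : p ∈ gradeBy k ω n) :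
    p ∈ gradeBy k ⇑(-ω) (-n) := by
  rw [mem_gradeBy_iff] at hp ⊢
  intro v hv
  simp [show ω v = n from hp hv]

section Injective

variable {k G S : Type*} [CommRing k] [AddCommGroup G] [CommRing S] (ω : G →+ ℤ)
  {a : AddMonoidAlgebra k G}

theorem twist_algebraMap_away_injective (haω : a ∈ gradeBy k ω 0)
    (ha : Submonoid.powers a ≤ nonZeroDivisors (AddMonoidAlgebra k G)) :
    Function.Injective (twist (algebraMap (AddMonoidAlgebra k G) (Localization.Away a)) ω
      (IsLocalization.Away.algebraMap_isUnit a).unit) := by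
  set L := Localization.Away a
  set u : Lˣ := (IsLocalization.Away.algebraMap_isUnit a).unit
  have hfix : twist (algebraMap _ L) (-ω) u a = algebraMap _ L a := by
    rw [twist_of_mem_gradeBy _ _ _ (neg_zero (G := ℤ) ▸ mem_gradeBy_neg haω), zpow_zero,
      Units.val_one, mul_one]
  let ψ : L →+* L := IsLocalization.Away.lift a
    (by rw [hfix]; exact IsLocalization.Away.algebraMap_isUnit a)
  have hψ : ψ.comp (twist (algebraMap _ L) ω u) = algebraMap _ L :=
    comp_twist_eq_of_comp_eq_twist_neg _ _ _ (IsLocalization.lift_comp _)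
      (by simp [ψ, u, hfix])
  refine Function.Injective.of_comp (f := ψ) ?_
  rw [← RingHom.coe_comp, hψ]
  exact IsLocalization.injective L ha

theorem twist_injective (haω : a ∈ gradeBy k ω 0) {φ : AddMonoidAlgebra k G →+* S}
    (hφ : Function.Injective φ) (u : Sˣ) (hu : (u : S) = φ a) :
    Function.Injective (twist φ ω u) := by
  have ha : Submonoid.powers a ≤ nonZeroDivisors (AddMonoidAlgebra k G) := by
    rintro _ ⟨n, rfl⟩
    refine mem_nonZeroDivisors_of_injective hφ ?_
    rw [map_pow, ← hu]
    exact (u.isUnit.pow n).mem_nonZeroDivisors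
  set L := Localization.Away a
  let ι : L →+* S := IsLocalization.Away.lift a (hu ▸ u.isUnit)
  have hι : ι.comp (algebraMap _ L) = φ := IsLocalization.lift_comp _
  have hιu : Units.map (ι : L →* S) (IsLocalization.Away.algebraMap_isUnit a).unit = u :=
    Units.ext (by simp [ι, hu])
  have hι_inj : Function.Injective ι := (IsLocalization.lift_injective_iff _).2 fun x y =>
    (IsLocalization.injective L ha).eq_iff.trans hφ.eq_iff.symm
  rw [← hι, ← hιu, ← comp_twist]
  exact hι_inj.comp (twist_algebraMap_away_injective ω haω ha)

end Injective

section Mutation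

variable {k G K : Type*} [CommRing k] [AddCommGroup G] [Field K]
  [Algebra (AddMonoidAlgebra k G) K] [IsFractionRing (AddMonoidAlgebra k G) K]
  {a : AddMonoidAlgebra k G} (u : Kˣ) (hu : (u : K) = algebraMap _ K a)

noncomputable def mutationHom (ω : G →+ ℤ) (haω : a ∈ gradeBy k ω 0) : K →+* K :=
  IsFractionRing.lift (twist_injective ω haω (IsFractionRing.injective _ K) u hu)

theorem mutationHom_algebraMap (ω : G →+ ℤ) (haω : a ∈ gradeBy k ω 0)
    (p : AddMonoidAlgebra k G) :
    mutationHom u hu ω haω (algebraMap _ K p) = twist (algebraMap _ K) ω u p :=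
  IsFractionRing.lift_algebraMap _ _

theorem mutationHom_comp_mutationHom {ω ω' : G →+ ℤ} (h : ω + ω' = 0)
    (haω : a ∈ gradeBy k ω 0) (haω' : a ∈ gradeBy k ω' 0) :
    (mutationHom u hu ω' haω').comp (mutationHom u hu ω haω) = RingHom.id K := by
  obtain rfl : ω' = -ω := (neg_eq_of_add_eq_zero_right h).symm
  refine IsLocalization.ringHom_ext (nonZeroDivisors (AddMonoidAlgebra k G)) ?_
  have hcomp : ∀ ω' haω', (mutationHom u hu ω' haω').comp (algebraMap _ K) =
      twist (algebraMap _ K) ω' u :=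
    fun ω' haω' => RingHom.ext (mutationHom_algebraMap u hu ω' haω')
  rw [RingHom.id_comp, RingHom.comp_assoc, hcomp]
  refine comp_twist_eq_of_comp_eq_twist_neg _ _ _ (hcomp _ _) ?_
  rw [hu, ← RingHom.comp_apply, hcomp, twist_of_mem_gradeBy _ _ _ haω', zpow_zero, Units.val_one,
    mul_one]

noncomputable def mutation (ω : G →+ ℤ) (haω : a ∈ gradeBy k ω 0) : K ≃+* K :=
  RingEquiv.ofRingHom (mutationHom u hu ω haω)
    (mutationHom u hu (-ω) (neg_zero (G := ℤ) ▸ mem_gradeBy_neg haω))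
    (mutationHom_comp_mutationHom u hu (neg_add_cancel ω) _ _)
    (mutationHom_comp_mutationHom u hu (add_neg_cancel ω) _ _)

theorem mutation_algebraMap_single (ω : G →+ ℤ) (haω : a ∈ gradeBy k ω 0) (v : G) (c : k) :
    mutation u hu ω haω (algebraMap _ K (single v c)) =
      algebraMap _ K (single v c) * (u : K) ^ ω v := by
  rw [mutation, RingEquiv.ofRingHom_apply, mutationHom_algebraMap, twist_single,
    Units.val_zpow_eq_zpow_val]

end Mutation

section ConstantTerm

variable {k G : Type*} [CommSemiring k] [AddCommMonoid G] {ω : G →+ ℤ}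

theorem coeff_zero_eq_zero_of_mem_gradeBy {p : AddMonoidAlgebra k G} {n : ℤ}
    (hp : p ∈ gradeBy k ω n) (hn : n ≠ 0) : p.coeff 0 = 0 := by
  by_contra h
  have h0 : ω 0 = n := (mem_gradeBy_iff _ _ _ _).1 hp (Finsupp.mem_support_iff.2 h)
  exact hn (h0 ▸ map_zero ω)

variable {u v u' v' : AddMonoidAlgebra k G}

theorem coeff_zero_mul_pow_mul_pow_eq (hu : u ∈ gradeBy k ω (-1)) (hv : v ∈ gradeBy k ω 1)
    (hu' : u' ∈ gradeBy k ω (-1)) (hv' : v' ∈ gradeBy k ω 1) (huv : u * v = u' * v')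
    {c : AddMonoidAlgebra k G} (hc : c ∈ gradeBy k ω 0) (i j : ℕ) :
    (c * u ^ i * v ^ j).coeff 0 = (c * u' ^ i * v' ^ j).coeff 0 := by
  rcases eq_or_ne i j with rfl | hij
  · simp only [mul_assoc, ← mul_pow, huv]
  have hdeg : ∀ {x y}, x ∈ gradeBy k ω (-1) → y ∈ gradeBy k ω 1 →
      c * x ^ i * y ^ j ∈ gradeBy k ω (0 + i • (-1) + j • 1) := fun hx hy =>
    SetLike.mul_mem_graded (SetLike.mul_mem_graded hc (SetLike.pow_mem_graded i hx))
      (SetLike.pow_mem_graded j hy)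
  have hne : (0 + i • (-1) + j • 1 : ℤ) ≠ 0 := by simp; omega
  rw [coeff_zero_eq_zero_of_mem_gradeBy (hdeg hu hv) hne,
    coeff_zero_eq_zero_of_mem_gradeBy (hdeg hu' hv') hne]

theorem coeff_zero_add_add_pow_eq (hu : u ∈ gradeBy k ω (-1)) (hv : v ∈ gradeBy k ω 1)
    (hu' : u' ∈ gradeBy k ω (-1)) (hv' : v' ∈ gradeBy k ω 1) (huv : u * v = u' * v')
    {s : AddMonoidAlgebra k G} (hs : s ∈ gradeBy k ω 0) (d : ℕ) :
    ((s + u + v) ^ d).coeff 0 = ((s + u' + v') ^ d).coeff 0 := by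
  have expand : ∀ x y : AddMonoidAlgebra k G, (s + x + y) ^ d =
      ∑ m ∈ Finset.range (d + 1), ∑ i ∈ Finset.range (d - m + 1),
        s ^ m * ((d.choose m * (d - m).choose i : ℕ) : AddMonoidAlgebra k G) * x ^ i *
          y ^ (d - m - i) := by
    intro x y
    rw [add_assoc, add_pow]
    refine Finset.sum_congr rfl fun m _ => ?_
    rw [add_pow, Finset.mul_sum, Finset.sum_mul]
    refine Finset.sum_congr rfl fun i _ => ?_
    rw [Nat.cast_mul]
    ring
  simp only [expand, coeff_sum, Finsupp.finsetSum_apply]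
  refine Finset.sum_congr rfl fun m _ => Finset.sum_congr rfl fun i _ => ?_
  refine coeff_zero_mul_pow_mul_pow_eq hu hv hu' hv' huv ?_ _ _
  have h := SetLike.mul_mem_graded (SetLike.pow_mem_graded m hs)
    (SetLike.natCast_mem_graded (gradeBy k ω) (d.choose m * (d - m).choose i))
  rwa [smul_zero, add_zero] at h

end ConstantTerm

end AddMonoidAlgebra

namespace MM215

open AddMonoidAlgebra

theorem X_mem_gradeBy : X ∈ gradeBy ℂ w 0 := single_mem_gradeBy _ _ _
theorem Y_mem_gradeBy : Y ∈ gradeBy ℂ w 0 := single_mem_gradeBy _ _ _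
theorem Z_mem_gradeBy : Z ∈ gradeBy ℂ w (-1) := single_mem_gradeBy _ _ _
theorem XYZinv_mem_gradeBy : XYZinv ∈ gradeBy ℂ w 1 := single_mem_gradeBy _ _ _

theorem a_mem_gradeBy : a ∈ gradeBy ℂ w 0 :=
  add_mem (add_mem X_mem_gradeBy Y_mem_gradeBy) (SetLike.one_mem_graded _)

theorem a_pow_mem_gradeBy (n : ℕ) : a ^ n ∈ gradeBy ℂ w 0 :=
  (smul_zero n : n • (0 : ℤ) = 0) ▸ SetLike.pow_mem_graded n a_mem_gradeBy

theorem constTerm_f_pow_eq_constTerm_g_pow (d : ℕ) : constTerm (f ^ d) = constTerm (g ^ d) :=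
  coeff_zero_add_add_pow_eq
    (add_zero (-1 : ℤ) ▸ SetLike.mul_mem_graded Z_mem_gradeBy a_mem_gradeBy)
    (add_zero (1 : ℤ) ▸ SetLike.mul_mem_graded XYZinv_mem_gradeBy (a_pow_mem_gradeBy 2))
    Z_mem_gradeBy
    (add_zero (1 : ℤ) ▸ SetLike.mul_mem_graded XYZinv_mem_gradeBy (a_pow_mem_gradeBy 3))
    (by ring) (add_mem X_mem_gradeBy Y_mem_gradeBy) d

theorem a_ne_zero : a ≠ 0 := fun h => by
  have h0 : a.coeff 0 = 1 := by
    simp [a, X, Y, AddMonoidAlgebra.one_def, AddMonoidAlgebra.coeff_single]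
  simp [h] at h0

noncomputable def mu : FractionRing (LaurentPoly 3) ≃+* FractionRing (LaurentPoly 3) :=
  mutation (Units.mk0 (emb 3 a) ((map_ne_zero_iff _ (IsFractionRing.injective _ _)).2 a_ne_zero))
    rfl w a_mem_gradeBy

theorem mu_single (v : Fin 3 → ℤ) (c : ℂ) :
    mu (emb 3 (single v c)) = emb 3 (single v c) * emb 3 a ^ w v :=
  mutation_algebraMap_single _ _ w a_mem_gradeBy v c

theorem mu_f : mu (emb 3 f) = emb 3 g := by
  have ha : emb 3 a ≠ 0 := (map_ne_zero_iff _ (IsFractionRing.injective _ _)).2 a_ne_zero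
  have hX : mu (emb 3 X) = emb 3 X := by rw [X, mu_single]; simp [w]
  have hY : mu (emb 3 Y) = emb 3 Y := by rw [Y, mu_single]; simp [w]
  have hZ : mu (emb 3 Z) = emb 3 Z * (emb 3 a)⁻¹ := by rw [Z, mu_single]; simp [w]
  have hXYZinv : mu (emb 3 XYZinv) = emb 3 XYZinv * emb 3 a := by
    rw [XYZinv, mu_single]; simp [w]
  have hA : mu (emb 3 a) = emb 3 a := by simp only [a, map_add, map_one, hX, hY]
  have hf : f = X + Y + Z * a + XYZinv * a ^ 2 := rfl
  have hg : g = X + Y + Z + XYZinv * a ^ 3 := rfl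
  simp only [hf, hg, map_add, map_mul, map_pow, hX, hY, hZ, hXYZinv, hA]
  field_simp

/-- `g` is the mutation of `f` with weight `w = (0,0,-1)` and factor `a = x+y+1`:
the mutation automorphism of the fraction field sends `f` to the Laurent polynomial `g`,
and their powers up to `6` have equal constant terms. -/
theorem mutation_mm215 :
    ∃ σ : FractionRing (LaurentPoly 3) ≃+* FractionRing (LaurentPoly 3),
      (∀ (v : Fin 3 → ℤ) (c : ℂ),
        σ (emb 3 (AddMonoidAlgebra.single v c)) =
          emb 3 (AddMonoidAlgebra.single v c) * (emb 3 a) ^ (w v)) ∧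
      σ (emb 3 f) = emb 3 g ∧
      (∀ d : ℕ, d ≤ 6 → constTerm (f ^ d) = constTerm (g ^ d)) :=
  ⟨mu, mu_single, mu_f, fun d _ => constTerm_f_pow_eq_constTerm_g_pow d⟩

end MM215
end

section
/- For all natural numbers k, the identity Σ_{j=0}^{k} binom(2k, 2j) · binom(2j, j) · binom(2k−2j, k−j) = binom(2k, k)² holds. -/
/-!
Both `C(2k,2j) C(2j,j) C(2k-2j,k-j)` and `C(2k,k) C(k,j)²` are the multinomial coefficient
`(2k)! / (j! j! (k-j)! (k-j)!)`: the first splits `2k` into `2j + (2k-2j)` and then each part in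
halves, the second splits it into `k + k` and then each half into `j + (k-j)`. Summing
`C(k,j)²` over `j` gives `C(2k,k)` by Vandermonde's identity.
-/

namespace Nat

theorem add_add_choose_mul_choose_mul_choose_mul_factorial (a b c d : ℕ) :
    (a + b + (c + d)).choose (a + b) * (a + b).choose a * (c + d).choose c *
        (a ! * b ! * c ! * d !) = (a + b + (c + d))! := by
  calc (a + b + (c + d)).choose (a + b) * (a + b).choose a * (c + d).choose c *
        (a ! * b ! * c ! * d !)
      = (a + b + (c + d)).choose (a + b) * ((a + b).choose a * a ! * b !) *
          ((c + d).choose c * c ! * d !) := by ring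
    _ = (a + b + (c + d)).choose (a + b) * (a + b)! * (c + d)! := by
      rw [choose_symm_add (a := a), add_choose_mul_factorial_mul_factorial,
        choose_symm_add (a := c), add_choose_mul_factorial_mul_factorial, mul_assoc]
    _ = (a + b + (c + d))! := by
      rw [choose_symm_add (a := a + b), add_choose_mul_factorial_mul_factorial]

theorem add_add_choose_mul_choose_mul_choose_comm (a b c d : ℕ) :
    (a + b + (c + d)).choose (a + b) * (a + b).choose a * (c + d).choose c =
      (a + c + (b + d)).choose (a + c) * (a + c).choose a * (b + d).choose b := by
  have hsum : a + c + (b + d) = a + b + (c + d) := by ring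
  refine Nat.eq_of_mul_eq_mul_right (by positivity : 0 < a ! * b ! * c ! * d !) ?_
  calc _ = (a + b + (c + d))! := add_add_choose_mul_choose_mul_choose_mul_factorial a b c d
    _ = (a + c + (b + d)).choose (a + c) * (a + c).choose a * (b + d).choose b *
          (a ! * c ! * b ! * d !) := by
      rw [add_add_choose_mul_choose_mul_choose_mul_factorial, hsum]
    _ = _ := by ring

theorem two_mul_choose_two_mul_mul_choose_mul_choose (k j : ℕ) (hj : j ≤ k) :
    (2 * k).choose (2 * j) * (2 * j).choose j * (2 * k - 2 * j).choose (k - j) =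
      (2 * k).choose k * k.choose j ^ 2 := by
  obtain ⟨m, rfl⟩ := Nat.exists_eq_add_of_le hj
  have h := add_add_choose_mul_choose_mul_choose_comm j j m m
  rw [show j + j + (m + m) = 2 * (j + m) by ring, show j + m + (j + m) = 2 * (j + m) by ring,
    ← two_mul] at h
  rw [show 2 * (j + m) - 2 * j = m + m by omega, Nat.add_sub_cancel_left, h, sq, mul_assoc]

end Nat

/-- `Σ_{j=0}^{k} C(2k,2j) C(2j,j) C(2k-2j,k-j) = C(2k,k)²`. -/
theorem sum_central_binomial_identity (k : ℕ) :
    ∑ j ∈ Finset.range (k + 1),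
        (2 * k).choose (2 * j) * (2 * j).choose j * (2 * k - 2 * j).choose (k - j) =
      ((2 * k).choose k) ^ 2 := by
  calc _ = ∑ j ∈ Finset.range (k + 1), (2 * k).choose k * k.choose j ^ 2 :=
        Finset.sum_congr rfl fun j hj =>
          Nat.two_mul_choose_two_mul_mul_choose_mul_choose k j (Finset.mem_range_succ_iff.mp hj)
    _ = ((2 * k).choose k) ^ 2 := by rw [← Finset.mul_sum, Nat.sum_range_choose_sq, sq]
end
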